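/- Let S_{V,4} be the linear span of S_V and φ₄ in ℂ² ⊗ ℂ² ⊗ ℂ². Then the set of one-dimensional subspaces of S_{V,4} spanned by product vectors has exactly 6 elements, namely those spanned by: |000⟩; |111⟩; (|0⟩ − |1⟩) ⊗ (|0⟩ − |1⟩) ⊗ (|0⟩ − |1⟩); |1⟩ ⊗ (|0⟩ − |1⟩) ⊗ |0⟩; |0⟩ ⊗ |1⟩ ⊗ (|0⟩ − |1⟩); and (|0⟩ − |1⟩) ⊗ |0⟩ ⊗ |1⟩. In particular, every product vector in S_{V,4} is a scalar multiple of one of these six vectors. -/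

import Mathlib

noncomputable section

abbrev Q : Type := EuclideanSpace ℂ (Fin 2)
abbrev Q2 : Type := EuclideanSpace ℂ (Fin 2 × Fin 2)
abbrev Q3 : Type := EuclideanSpace ℂ (Fin 2 × Fin 2 × Fin 2)

/-- standard basis vector of ℂ² -/
def ket2 (i : Fin 2) : Q := EuclideanSpace.single i 1

/-- the state |+⟩ -/
def plus : Q := (Real.sqrt 2 : ℂ)⁻¹ • (ket2 0 + ket2 1)

/-- the state |−⟩ -/
def minus : Q := (Real.sqrt 2 : ℂ)⁻¹ • (ket2 0 - ket2 1)

/-- elementary tensor of three qubit vectors, in ℂ² ⊗ ℂ² ⊗ ℂ² ≅ ℂ⁸ -/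
def tp3 (u v w : Q) : Q3 := WithLp.toLp 2 (fun (p : Fin 2 × Fin 2 × Fin 2) => u p.1 * v p.2.1 * w p.2.2)

/-- a product vector in ℂ² ⊗ ℂ² ⊗ ℂ² -/
def IsProd3 (ξ : Q3) : Prop := ∃ u v w : Q, ξ = tp3 u v w

/-- the set of one-dimensional subspaces of `T` spanned by (nonzero) product vectors -/
def prodLines3 (T : Submodule ℂ Q3) : Set (Submodule ℂ Q3) :=
  {L | ∃ ξ : Q3, ξ ≠ 0 ∧ ξ ∈ T ∧ IsProd3 ξ ∧ L = Submodule.span ℂ {ξ}}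

/-- a factorized vector across the bipartite cut {1} | {2,3} -/
def cut1 (u : Q) (η : Q2) : Q3 := WithLp.toLp 2 (fun (p : Fin 2 × Fin 2 × Fin 2) => u p.1 * η p.2)

/-- a factorized vector across the bipartite cut {2} | {1,3} -/
def cut2 (u : Q) (η : Q2) : Q3 := WithLp.toLp 2 (fun (p : Fin 2 × Fin 2 × Fin 2) => u p.2.1 * η (p.1, p.2.2))

/-- a factorized vector across the bipartite cut {3} | {1,2} -/
def cut3 (u : Q) (η : Q2) : Q3 := WithLp.toLp 2 (fun (p : Fin 2 × Fin 2 × Fin 2) => u p.2.2 * η (p.1, p.2.1))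

def φ₁ : Q3 := tp3 (ket2 0) (ket2 1) plus
def φ₂ : Q3 := tp3 (ket2 1) plus (ket2 0)
def φ₃ : Q3 := tp3 plus (ket2 0) (ket2 1)
def φ₄ : Q3 := tp3 minus minus minus

/-- the span of the three-qubit UPB of Bennett et al. -/
def V3 : Submodule ℂ Q3 := Submodule.span ℂ {φ₁, φ₂, φ₃, φ₄}

/-- the orthogonal complement of the span of the three-qubit UPB -/
def SV : Submodule ℂ Q3 := V3ᗮ

/-- the standard basis vector |xyz⟩ of ℂ² ⊗ ℂ² ⊗ ℂ² -/
def ketE (x y z : Fin 2) : Q3 := tp3 (ket2 x) (ket2 y) (ket2 z)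

/-- the perturbation of `S_V` by `φ₄` -/
def SV4 : Submodule ℂ Q3 := SV ⊔ Submodule.span ℂ {φ₄}

/-!
Since `φ₄` is orthogonal to `φ₁, φ₂, φ₃`, adding it back to `S_V` gives `S_{V,4} = {φ₁, φ₂, φ₃}ᗮ`.
For a product vector `u ⊗ v ⊗ w` each of the three orthogonality conditions factors, and says that
one of `u, v, w` lies on a prescribed line among `ℂ|0⟩, ℂ|1⟩, ℂ|−⟩`; for each factor the three
conditions prescribe three different lines. A nonzero qubit lies on at most one of these lines, so
each factor fulfils exactly one condition, and the factors are matched bijectively with the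
conditions: this gives the `3! = 6` product lines.
-/

open Submodule
open scoped InnerProductSpace

theorem Submodule.orthogonal_sup_span_singleton_sup {𝕜 E : Type*} [RCLike 𝕜]
    [NormedAddCommGroup E] [InnerProductSpace 𝕜 E] {K : Submodule 𝕜 E} {x : E} (hx : x ∈ Kᗮ) :
    (K ⊔ 𝕜 ∙ x)ᗮ ⊔ 𝕜 ∙ x = Kᗮ := by
  rw [← inf_orthogonal, sup_comm, inf_comm]
  exact sup_orthogonal_inf_of_hasOrthogonalProjection ((span_singleton_le_iff_mem _ _).mpr hx)

theorem Submodule.mem_orthogonal_span_triple_iff {𝕜 E : Type*} [RCLike 𝕜]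
    [NormedAddCommGroup E] [InnerProductSpace 𝕜 E] (a b c ξ : E) :
    ξ ∈ (span 𝕜 {a, b, c})ᗮ ↔ ⟪a, ξ⟫_𝕜 = 0 ∧ ⟪b, ξ⟫_𝕜 = 0 ∧ ⟪c, ξ⟫_𝕜 = 0 := by
  simp only [span_insert, ← inf_orthogonal, mem_inf, mem_orthogonal_singleton_iff_inner_right]

theorem span_singleton_ne_of_apply {ι : Type*} {x y : EuclideanSpace ℂ ι} (i : ι)
    (h : ¬(x i = 0 ↔ y i = 0)) : ℂ ∙ x ≠ ℂ ∙ y := by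
  intro hxy
  obtain ⟨c, rfl⟩ := span_singleton_eq_span_singleton.mp hxy
  simp [Units.smul_def] at h

@[simp]
lemma ket2_apply (i j : Fin 2) : ket2 i j = if j = i then 1 else 0 := by
  simp [ket2]

@[simp]
lemma tp3_apply (u v w : Q) (p : Fin 2 × Fin 2 × Fin 2) :
    tp3 u v w p = u p.1 * v p.2.1 * w p.2.2 := rfl

lemma tp3_smul_smul_smul (α β γ : ℂ) (a b c : Q) :
    tp3 (α • a) (β • b) (γ • c) = (α * β * γ) • tp3 a b c := by
  ext p
  simp only [tp3_apply, PiLp.smul_apply, smul_eq_mul]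
  ring

lemma span_tp3_eq_span_tp3 {u v w a b c : Q} (hu : ℂ ∙ u = ℂ ∙ a) (hv : ℂ ∙ v = ℂ ∙ b)
    (hw : ℂ ∙ w = ℂ ∙ c) : ℂ ∙ tp3 u v w = ℂ ∙ tp3 a b c := by
  obtain ⟨α, rfl⟩ := span_singleton_eq_span_singleton.mp hu
  obtain ⟨β, rfl⟩ := span_singleton_eq_span_singleton.mp hv
  obtain ⟨γ, rfl⟩ := span_singleton_eq_span_singleton.mp hw
  simp only [Units.smul_def, tp3_smul_smul_smul]
  exact (span_singleton_smul_eq (α * β * γ).isUnit _).symm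

lemma tp3_ne_zero_iff {u v w : Q} : tp3 u v w ≠ 0 ↔ u ≠ 0 ∧ v ≠ 0 ∧ w ≠ 0 := by
  constructor
  · intro h
    refine ⟨?_, ?_, ?_⟩ <;> rintro rfl <;> exact h (by ext p; simp)
  · rintro ⟨hu, hv, hw⟩ h
    obtain ⟨i, hi⟩ : ∃ i, u i ≠ 0 := by by_contra! h'; exact hu (by ext i; simp [h'])
    obtain ⟨j, hj⟩ : ∃ j, v j ≠ 0 := by by_contra! h'; exact hv (by ext i; simp [h'])
    obtain ⟨k, hk⟩ : ∃ k, w k ≠ 0 := by by_contra! h'; exact hw (by ext i; simp [h'])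
    simpa [hi, hj, hk] using congrArg (fun ξ : Q3 => ξ (i, j, k)) h

lemma eq_zero_of_apply_zero_of_apply_one {a : Q} (h0 : a 0 = 0) (h1 : a 1 = 0) : a = 0 := by
  ext i; fin_cases i <;> simpa

lemma span_eq_span_ket2_zero {a : Q} (ha : a ≠ 0) (h : a 1 = 0) : ℂ ∙ a = ℂ ∙ ket2 0 := by
  have h0 : a 0 ≠ 0 := fun h0 => ha (eq_zero_of_apply_zero_of_apply_one h0 h)
  have : a = a 0 • ket2 0 := by ext i; fin_cases i <;> simp [h]
  rw [this, span_singleton_smul_eq (IsUnit.mk0 _ h0)]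

lemma span_eq_span_ket2_one {a : Q} (ha : a ≠ 0) (h : a 0 = 0) : ℂ ∙ a = ℂ ∙ ket2 1 := by
  have h1 : a 1 ≠ 0 := fun h1 => ha (eq_zero_of_apply_zero_of_apply_one h h1)
  have : a = a 1 • ket2 1 := by ext i; fin_cases i <;> simp [h]
  rw [this, span_singleton_smul_eq (IsUnit.mk0 _ h1)]

lemma span_eq_span_ket2_sub {a : Q} (ha : a ≠ 0) (h : a 0 + a 1 = 0) :
    ℂ ∙ a = ℂ ∙ (ket2 0 - ket2 1) := by
  have h1 : a 1 = -a 0 := by linear_combination h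
  have h0 : a 0 ≠ 0 := fun h0 =>
    ha (eq_zero_of_apply_zero_of_apply_one h0 (by rw [h1, h0, neg_zero]))
  have : a = a 0 • (ket2 0 - ket2 1) := by ext i; fin_cases i <;> simp [h1]
  rw [this, span_singleton_smul_eq (IsUnit.mk0 _ h0)]

lemma V3_eq_span_sup_span_φ₄ : V3 = span ℂ {φ₁, φ₂, φ₃} ⊔ ℂ ∙ φ₄ := by
  rw [V3, ← span_union]
  simp only [Set.insert_union, Set.singleton_union]

lemma plus_apply (i : Fin 2) : plus i = (Real.sqrt 2 : ℂ)⁻¹ := by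
  fin_cases i <;> simp [plus]

lemma inner_φ₁_eq_zero_iff (ξ : Q3) : ⟪φ₁, ξ⟫_ℂ = 0 ↔ ξ (0, 1, 0) + ξ (0, 1, 1) = 0 := by
  simp [φ₁, PiLp.inner_apply, Fintype.sum_prod_type, plus_apply, ← add_mul]

lemma inner_φ₂_eq_zero_iff (ξ : Q3) : ⟪φ₂, ξ⟫_ℂ = 0 ↔ ξ (1, 0, 0) + ξ (1, 1, 0) = 0 := by
  simp [φ₂, PiLp.inner_apply, Fintype.sum_prod_type, plus_apply, ← add_mul]

lemma inner_φ₃_eq_zero_iff (ξ : Q3) : ⟪φ₃, ξ⟫_ℂ = 0 ↔ ξ (0, 0, 1) + ξ (1, 0, 1) = 0 := by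
  simp [φ₃, PiLp.inner_apply, Fintype.sum_prod_type, plus_apply, ← add_mul]

lemma mem_SV4_iff (ξ : Q3) : ξ ∈ SV4 ↔
    ξ (0, 1, 0) + ξ (0, 1, 1) = 0 ∧ ξ (1, 0, 0) + ξ (1, 1, 0) = 0 ∧
      ξ (0, 0, 1) + ξ (1, 0, 1) = 0 := by
  have hφ₄ : φ₄ ∈ (span ℂ {φ₁, φ₂, φ₃})ᗮ := by
    have hminus : minus 0 + minus 1 = 0 := by simp [minus]
    simp only [mem_orthogonal_span_triple_iff, inner_φ₁_eq_zero_iff, inner_φ₂_eq_zero_iff,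
      inner_φ₃_eq_zero_iff, φ₄, tp3_apply]
    refine ⟨?_, ?_, ?_⟩ <;> linear_combination minus 0 * minus 1 * hminus
  rw [SV4, SV, V3_eq_span_sup_span_φ₄, orthogonal_sup_span_singleton_sup hφ₄,
    mem_orthogonal_span_triple_iff, inner_φ₁_eq_zero_iff, inner_φ₂_eq_zero_iff,
    inner_φ₃_eq_zero_iff]

lemma tp3_mem_SV4_iff (u v w : Q) : tp3 u v w ∈ SV4 ↔
    (u 0 = 0 ∨ v 1 = 0 ∨ w 0 + w 1 = 0) ∧ (u 1 = 0 ∨ v 0 + v 1 = 0 ∨ w 0 = 0) ∧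
      (u 0 + u 1 = 0 ∨ v 0 = 0 ∨ w 1 = 0) := by
  simp only [mem_SV4_iff, tp3_apply, ← mul_add, ← add_mul, mul_eq_zero, or_assoc]

lemma factor_lines_of_tp3_mem_SV4 {u v w : Q} (hu : u ≠ 0) (hv : v ≠ 0) (hw : w ≠ 0)
    (h : tp3 u v w ∈ SV4) :
    (ℂ ∙ u, ℂ ∙ v, ℂ ∙ w) ∈ ({(ℂ ∙ ket2 0, ℂ ∙ ket2 0, ℂ ∙ ket2 0),
      (ℂ ∙ ket2 1, ℂ ∙ ket2 1, ℂ ∙ ket2 1),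
      (ℂ ∙ (ket2 0 - ket2 1), ℂ ∙ (ket2 0 - ket2 1), ℂ ∙ (ket2 0 - ket2 1)),
      (ℂ ∙ ket2 1, ℂ ∙ (ket2 0 - ket2 1), ℂ ∙ ket2 0),
      (ℂ ∙ ket2 0, ℂ ∙ ket2 1, ℂ ∙ (ket2 0 - ket2 1)),
      (ℂ ∙ (ket2 0 - ket2 1), ℂ ∙ ket2 0, ℂ ∙ ket2 1)} :
      Set (Submodule ℂ Q × Submodule ℂ Q × Submodule ℂ Q)) := by
  obtain ⟨h1, h2, h3⟩ := (tp3_mem_SV4_iff u v w).mp h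
  replace h1 := h1.imp (span_eq_span_ket2_one hu)
    (Or.imp (span_eq_span_ket2_zero hv) (span_eq_span_ket2_sub hw))
  replace h2 := h2.imp (span_eq_span_ket2_zero hu)
    (Or.imp (span_eq_span_ket2_sub hv) (span_eq_span_ket2_one hw))
  replace h3 := h3.imp (span_eq_span_ket2_sub hu)
    (Or.imp (span_eq_span_ket2_one hv) (span_eq_span_ket2_zero hw))
  have h01 : ℂ ∙ ket2 0 ≠ ℂ ∙ ket2 1 := span_singleton_ne_of_apply 1 (by simp)
  have h0m : ℂ ∙ ket2 0 ≠ ℂ ∙ (ket2 0 - ket2 1) := span_singleton_ne_of_apply 1 (by simp)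
  have h1m : ℂ ∙ ket2 1 ≠ ℂ ∙ (ket2 0 - ket2 1) := span_singleton_ne_of_apply 0 (by simp)
  rcases h1 with h1 | h1 | h1 <;> rcases h2 with h2 | h2 | h2 <;>
    rcases h3 with h3 | h3 | h3 <;> simp_all

def sixProductLines : Set (Submodule ℂ Q3) :=
  {ℂ ∙ ketE 0 0 0, ℂ ∙ ketE 1 1 1,
    ℂ ∙ tp3 (ket2 0 - ket2 1) (ket2 0 - ket2 1) (ket2 0 - ket2 1),
    ℂ ∙ tp3 (ket2 1) (ket2 0 - ket2 1) (ket2 0), ℂ ∙ tp3 (ket2 0) (ket2 1) (ket2 0 - ket2 1),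
    ℂ ∙ tp3 (ket2 0 - ket2 1) (ket2 0) (ket2 1)}

lemma span_tp3_mem_prodLines3 {T : Submodule ℂ Q3} {u v w : Q} (hu : u ≠ 0) (hv : v ≠ 0)
    (hw : w ≠ 0) (h : tp3 u v w ∈ T) : ℂ ∙ tp3 u v w ∈ prodLines3 T :=
  ⟨_, tp3_ne_zero_iff.mpr ⟨hu, hv, hw⟩, h, ⟨u, v, w, rfl⟩, rfl⟩

lemma prodLines3_SV4 : prodLines3 SV4 = sixProductLines := by
  ext L
  constructor
  · rintro ⟨_, hne, hmem, ⟨u, v, w, rfl⟩, rfl⟩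
    obtain ⟨hu, hv, hw⟩ := tp3_ne_zero_iff.mp hne
    have hlines := factor_lines_of_tp3_mem_SV4 hu hv hw hmem
    simp only [Set.mem_insert_iff, Set.mem_singleton_iff, Prod.mk.injEq] at hlines
    rcases hlines with ⟨hu, hv, hw⟩ | ⟨hu, hv, hw⟩ | ⟨hu, hv, hw⟩ | ⟨hu, hv, hw⟩ | ⟨hu, hv, hw⟩ |
      ⟨hu, hv, hw⟩ <;> simp [sixProductLines, span_tp3_eq_span_tp3 hu hv hw, ketE]
  · have h0 : ket2 0 ≠ 0 := fun h => by simpa using congrArg (· 0) h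
    have h1 : ket2 1 ≠ 0 := fun h => by simpa using congrArg (· 1) h
    have hsub : ket2 0 - ket2 1 ≠ 0 := fun h => by simpa using congrArg (· 0) h
    rintro (rfl | rfl | rfl | rfl | rfl | rfl) <;>
      exact span_tp3_mem_prodLines3 (by assumption) (by assumption) (by assumption)
        ((tp3_mem_SV4_iff _ _ _).mpr (by simp))

lemma ncard_sixProductLines : sixProductLines.ncard = 6 := by
  rw [sixProductLines, Set.ncard_insert_of_notMem, Set.ncard_insert_of_notMem,
    Set.ncard_insert_of_notMem, Set.ncard_insert_of_notMem, Set.ncard_insert_of_notMem,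
    Set.ncard_singleton]
  all_goals
    simp only [Set.mem_insert_iff, Set.mem_singleton_iff, not_or]
    repeat' constructor
  -- the supports of the six lines are pairwise different, and these coordinates separate them
  all_goals
    first
    | (apply span_singleton_ne_of_apply (0, 0, 0); simp [ketE]; done)
    | (apply span_singleton_ne_of_apply (1, 1, 1); simp [ketE]; done)
    | (apply span_singleton_ne_of_apply (1, 0, 0); simp; done)
    | (apply span_singleton_ne_of_apply (0, 1, 0); simp)

theorem statement8 :
    prodLines3 SV4 =
      {Submodule.span ℂ {ketE 0 0 0},
       Submodule.span ℂ {ketE 1 1 1},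
       Submodule.span ℂ {tp3 (ket2 0 - ket2 1) (ket2 0 - ket2 1) (ket2 0 - ket2 1)},
       Submodule.span ℂ {tp3 (ket2 1) (ket2 0 - ket2 1) (ket2 0)},
       Submodule.span ℂ {tp3 (ket2 0) (ket2 1) (ket2 0 - ket2 1)},
       Submodule.span ℂ {tp3 (ket2 0 - ket2 1) (ket2 0) (ket2 1)}} ∧
    (prodLines3 SV4).ncard = 6 := by
  refine ⟨prodLines3_SV4, ?_⟩
  rw [prodLines3_SV4]
  exact ncard_sixProductLines
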